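/- For every r > 0, every s ∈ ℂ that is not an integer and every k ∈ ℤ, one has the symmetry ω̃(−k) = ω̃(k). Equivalently, setting F(k) = (k+s)⁻¹ · Γ((k−s)/2) Γ((k+s+1)/2) / ( Γ((k+s)/2) Γ((k−s+1)/2) ), one has F(−k) = F(k) for all k ∈ ℤ. -/

import Mathlib

/-!
Put `a = (k + s)/2`, `b = (k - s)/2` and `R z = Γ(z + 1/2) / Γ z`. Both `ω̃(k) = r⁻¹ g(k)` and
`F(k) = g(k)⁻¹` are functions of `g(k) = 2a R(b) / R(a)`, and `k ↦ -k` sends `(a, b)` to `(-b, -a)`.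
The reflection formula, applied at `z` and at `z + 1/2`, gives `R(z) R(-z) = -z tan(πz)`, and since
`a + b = k` is an integer, `tan(πa) = -tan(πb)`; together these make `g(-k) = g(k)`.
-/

noncomputable section

open Complex
open scoped Real

/-- The Fourier coefficients `ω̃(k)` of the dispersion relation on de Sitter space. -/
def omt (r : ℝ) (s : ℂ) (k : ℤ) : ℂ :=
  (r : ℂ)⁻¹ * ((k : ℂ) + s) *
    (Complex.Gamma (((k : ℂ) + s) / 2) * Complex.Gamma (((k : ℂ) + 1 - s) / 2)) /
    (Complex.Gamma (((k : ℂ) - s) / 2) * Complex.Gamma (((k : ℂ) + 1 + s) / 2))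

/-- The Gamma-factor combination `F(k)` occurring in the symmetry proof. -/
def Ffun (s : ℂ) (k : ℤ) : ℂ :=
  ((k : ℂ) + s)⁻¹ *
    (Complex.Gamma (((k : ℂ) - s) / 2) * Complex.Gamma (((k : ℂ) + s + 1) / 2)) /
    (Complex.Gamma (((k : ℂ) + s) / 2) * Complex.Gamma (((k : ℂ) - s + 1) / 2))

def gammaRatio (z : ℂ) : ℂ := Gamma (z + 1 / 2) / Gamma z

-- No hypothesis on `z`: at the poles both sides vanish, as `Γ(-n) = 0` and `x / 0 = 0`.
theorem gammaRatio_mul_gammaRatio_neg (z : ℂ) :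
    gammaRatio z * gammaRatio (-z) = -z * tan (π * z) := by
  rcases eq_or_ne z 0 with rfl | hz
  · simp [gammaRatio]
  have hπ : (π : ℂ) ≠ 0 := ofReal_ne_zero.mpr Real.pi_ne_zero
  have h_half : Gamma (z + 1 / 2) * Gamma (-z + 1 / 2) = π / cos (π * z) := by
    rw [show -z + 1 / 2 = 1 - (z + 1 / 2) by ring, Gamma_mul_Gamma_one_sub,
      show π * (z + 1 / 2) = π * z + π / 2 by ring, sin_add_pi_div_two]
  have h_int : Gamma z * Gamma (-z) = π / (sin (π * z) * -z) := by
    rw [← div_div, ← Gamma_mul_Gamma_one_sub, show 1 - z = -z + 1 by ring,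
      Gamma_add_one _ (neg_ne_zero.mpr hz), eq_div_iff (neg_ne_zero.mpr hz)]
    ring
  rw [gammaRatio, gammaRatio, div_mul_div_comm, h_half, h_int, div_div_div_cancel_left' _ _ hπ,
    tan_eq_sin_div_cos]
  ring

theorem tan_pi_mul_add_tan_pi_mul {a b : ℂ} {k : ℤ} (h : a + b = k) :
    tan (π * a) + tan (π * b) = 0 := by
  rw [show π * a = k * π - π * b by rw [← h]; ring, tan_int_mul_pi_sub, neg_add_cancel]

theorem gammaRatio_half_ne_zero {s : ℂ} (hs : ∀ n : ℤ, s ≠ n) (m : ℤ) :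
    gammaRatio ((s + m) / 2) ≠ 0 := by
  have hΓ (j : ℤ) : Gamma ((s + j) / 2) ≠ 0 :=
    Gamma_ne_zero fun n h => hs (-2 * n - j) (by push_cast; linear_combination 2 * h)
  refine div_ne_zero ?_ (hΓ m)
  convert hΓ (m + 1) using 2
  push_cast
  ring

theorem gammaRatio_reflect {a b : ℂ} {k : ℤ} (h : a + b = k)
    (ha : gammaRatio a ≠ 0) (hb : gammaRatio (-b) ≠ 0) :
    2 * -b * gammaRatio (-a) / gammaRatio (-b) = 2 * a * gammaRatio b / gammaRatio a := by
  rw [div_eq_div_iff hb ha]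
  linear_combination (-2 * b) * gammaRatio_mul_gammaRatio_neg a
    - 2 * a * gammaRatio_mul_gammaRatio_neg b + 2 * a * b * tan_pi_mul_add_tan_pi_mul h

def omtGammaFactor (s : ℂ) (k : ℤ) : ℂ :=
  ((k : ℂ) + s) * (Gamma (((k : ℂ) + s) / 2) * Gamma (((k : ℂ) + 1 - s) / 2)) /
    (Gamma (((k : ℂ) - s) / 2) * Gamma (((k : ℂ) + 1 + s) / 2))

theorem omt_eq_inv_mul (r : ℝ) (s : ℂ) (k : ℤ) :
    omt r s k = (r : ℂ)⁻¹ * omtGammaFactor s k := by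
  rw [omt, omtGammaFactor, mul_assoc, mul_div_assoc, mul_div_assoc]

theorem Ffun_eq_inv (s : ℂ) (k : ℤ) : Ffun s k = (omtGammaFactor s k)⁻¹ := by
  rw [Ffun, omtGammaFactor, show (k : ℂ) + s + 1 = k + 1 + s by ring,
    show (k : ℂ) - s + 1 = k + 1 - s by ring]
  simp only [div_eq_mul_inv, mul_inv, inv_inv]
  ring

theorem omtGammaFactor_eq (s : ℂ) (k : ℤ) :
    omtGammaFactor s k =
      2 * ((k + s) / 2) * gammaRatio ((k - s) / 2) / gammaRatio ((k + s) / 2) := by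
  rw [omtGammaFactor, gammaRatio, gammaRatio,
    show ((k : ℂ) + 1 - s) / 2 = (k - s) / 2 + 1 / 2 by ring,
    show ((k : ℂ) + 1 + s) / 2 = (k + s) / 2 + 1 / 2 by ring]
  simp only [div_eq_mul_inv, mul_inv, inv_inv]
  ring

theorem omtGammaFactor_neg {s : ℂ} (hs : ∀ n : ℤ, s ≠ n) (k : ℤ) :
    omtGammaFactor s (-k) = omtGammaFactor s k := by
  have hR := gammaRatio_half_ne_zero hs
  rw [omtGammaFactor_eq, omtGammaFactor_eq, Int.cast_neg,
    show (-(k : ℂ) + s) / 2 = -((k - s) / 2) by ring,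
    show (-(k : ℂ) - s) / 2 = -((k + s) / 2) by ring]
  refine gammaRatio_reflect (k := k) (by ring) ?_ ?_
  · convert hR k using 2
    ring
  · convert hR (-k) using 2
    push_cast
    ring

theorem omt_symmetry_general (r : ℝ) (s : ℂ)
    (hs : ∀ n : ℤ, s ≠ (n : ℂ)) (k : ℤ) :
    omt r s (-k) = omt r s k ∧ Ffun s (-k) = Ffun s k := by
  have h := omtGammaFactor_neg hs k
  exact ⟨by rw [omt_eq_inv_mul, omt_eq_inv_mul, h], by rw [Ffun_eq_inv, Ffun_eq_inv, h]⟩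

/-- the symmetry `ω̃(−k) = ω̃(k)`, equivalently `F(−k) = F(k)`. -/
theorem omt_symmetry (r : ℝ) (hr : 0 < r) (s : ℂ)
    (hs : ∀ n : ℤ, s ≠ (n : ℂ)) (k : ℤ) :
    omt r s (-k) = omt r s k ∧ Ffun s (-k) = Ffun s k :=
  omt_symmetry_general r s hs k
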